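/- Let R be a commutative ring and J ⊆ I ⊆ R ideals such that I/J is generated over R/J by a regular sequence (or more generally, I/J is an ideal of linear type in R/J). Then J ∩ Iⁿ = J·Iⁿ⁻¹ for all n ≥ 1. -/

import Mathlib

/-!
Lift the regular sequence to a list `l` in `R`, so that `I = J + (l)`, and peel off its first
element `a`, which is regular modulo `J`. If `J + (a) ⊆ I` is already Aluffi torsion-free, then
for `x ∈ J ∩ I^(n+1)` write `x = p + a q` with `p ∈ J I^n` and `q ∈ I^n`; then `a q ∈ J` forces
`q ∈ J ∩ I^n = J I^(n-1)`, whence `a q ∈ J I^n`.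
-/

open RingTheory.Sequence
open scoped Pointwise

namespace Ideal

variable {R : Type*} [CommRing R]

def IsAluffiTorsionFree (J I : Ideal R) : Prop :=
  ∀ n : ℕ, J ⊓ I ^ (n + 1) = J * I ^ n

lemma isAluffiTorsionFree_self (J : Ideal R) : IsAluffiTorsionFree J J := fun n => by
  rw [inf_eq_right.mpr (pow_le_self n.succ_ne_zero), pow_succ']

lemma smul_top_quotient_eq_map_span_singleton (J : Ideal R) (a : R) :
    (a • ⊤ : Submodule R (R ⧸ J)) = Submodule.map J.mkQ (span {a}) := by
  rw [← Submodule.ideal_span_singleton_smul]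
  conv_rhs => rw [← mul_top (span {a}), ← smul_eq_mul, Submodule.map_smul'', Submodule.map_top,
    Submodule.range_mkQ]

noncomputable def quotSMulTopQuotientEquivQuotientSup (J : Ideal R) (a : R) :
    QuotSMulTop a (R ⧸ J) ≃ₗ[R] R ⧸ (J ⊔ span {a}) :=
  Submodule.quotEquivOfEq _ _ (smul_top_quotient_eq_map_span_singleton J a) ≪≫ₗ
    Submodule.quotientQuotientEquivQuotientSup J (span {a})

lemma IsAluffiTorsionFree.of_sup_span_singleton {J I : Ideal R} {a : R}
    (ha : IsSMulRegular (R ⧸ J) a) (h : IsAluffiTorsionFree (J ⊔ span {a}) I) :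
    IsAluffiTorsionFree J I := by
  have hle : J ⊔ span {a} ≤ I := by simpa using h 0
  have haI : a ∈ I := hle (mem_sup_right (mem_span_singleton_self a))
  intro n
  induction n with
  | zero => simpa using le_sup_left.trans hle
  | succ n ih =>
    refine le_antisymm (fun x hx => ?_) (le_inf Ideal.mul_le_left ?_)
    · have hx' : x ∈ (J ⊔ span {a}) * I ^ (n + 1) := h (n + 1) ▸ ⟨mem_sup_left hx.1, hx.2⟩
      rw [sup_mul] at hx'
      obtain ⟨p, hp, z, hz, rfl⟩ := Submodule.mem_sup.mp hx'
      obtain ⟨q, hq, rfl⟩ := mem_span_singleton_mul.mp hz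
      have hqJ : q ∈ J := mem_of_isSMulRegular_quotient_of_smul_mem ha
        ((add_mem_cancel_left (Ideal.mul_le_left hp)).mp hx.1)
      have hq' : q ∈ J * I ^ n := ih ▸ ⟨hqJ, hq⟩
      have hIJ : I * (J * I ^ n) = J * I ^ (n + 1) := by ring
      exact add_mem hp (hIJ ▸ mul_mem_mul haI hq')
    · exact (mul_mono_left (le_sup_left.trans hle)).trans_eq (pow_succ' I _).symm

lemma isAluffiTorsionFree_sup_ofList {J : Ideal R} {l : List R}
    (hl : IsWeaklyRegular (R ⧸ J) l) : IsAluffiTorsionFree J (J ⊔ ofList l) := by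
  induction l generalizing J with
  | nil => simpa using isAluffiTorsionFree_self J
  | cons a t ih =>
    obtain ⟨ha, ht⟩ := (isWeaklyRegular_cons_iff _ a t).mp hl
    refine .of_sup_span_singleton ha ?_
    rw [ofList_cons, ← sup_assoc]
    exact ih ((quotSMulTopQuotientEquivQuotientSup J a).isWeaklyRegular_congr t |>.mp ht)

end Ideal

/-- If `I/J` is generated over `R/J` by a regular sequence, then `J ⊆ I` is
Aluffi torsion-free. -/
theorem aluffi_torsion_free_of_regular_sequence {R : Type*} [CommRing R]
    (J I : Ideal R) (hJI : J ≤ I)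
    (hreg : ∃ L : List (R ⧸ J), RingTheory.Sequence.IsRegular (R ⧸ J) L ∧
      Ideal.span {a | a ∈ L} = I.map (Ideal.Quotient.mk J)) :
    ∀ n : ℕ, 1 ≤ n → J ⊓ I ^ n = J * I ^ (n - 1) := by
  obtain ⟨L, hL, hspan⟩ := hreg
  obtain ⟨l, rfl⟩ := List.map_surjective_iff.mpr Ideal.Quotient.mk_surjective L
  have hl : IsWeaklyRegular (R ⧸ J) l :=
    (isWeaklyRegular_map_algebraMap_iff (R ⧸ J) (R ⧸ J) l).mp hL.toIsWeaklyRegular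
  have hI : J ⊔ Ideal.ofList l = I := by
    change Ideal.ofList _ = _ at hspan
    rw [← Ideal.map_ofList] at hspan
    have := congrArg (Ideal.comap (Ideal.Quotient.mk J)) hspan
    rwa [Ideal.comap_map_quotientMk, Ideal.comap_map_quotientMk, sup_eq_right.mpr hJI] at this
  intro n hn
  obtain ⟨m, rfl⟩ := Nat.exists_eq_add_of_le' hn
  rw [← hI, Nat.add_sub_cancel]
  exact Ideal.isAluffiTorsionFree_sup_ofList hl m
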